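/- arXiv:0712.2913 — 3 statements merged into one kernel-verified Lean document; each statement's English description precedes it below -/
import Mathlib

section
/- (Failure of C⁰-rigidity for multiple brackets, two-dimensional case.) For any three functions F_1, F_2, F_3 ∈ C_c^∞(ℝ²) and any ε > 0, there exist F'_1, F'_2, F'_3 ∈ C_c^∞(ℝ²) with ‖F'_i − F_i‖ < ε for i = 1,2,3 such that the triple Poisson bracket vanishes identically: {F'_1, {F'_2, F'_3}} ≡ 0. -/
/-- The phase space `ℝ^{2n} = ℝ^n × ℝ^n` with coordinates `(p, q)`. -/
abbrev Phase (n : ℕ) := (Fin n → ℝ) × (Fin n → ℝ)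

/-- Partial derivative `∂F/∂p_i`. -/
noncomputable def pderivP {n : ℕ} (F : Phase n → ℝ) (i : Fin n) (x : Phase n) : ℝ :=
  fderiv ℝ F x (Pi.single i 1, 0)

/-- Partial derivative `∂F/∂q_i`. -/
noncomputable def pderivQ {n : ℕ} (F : Phase n → ℝ) (i : Fin n) (x : Phase n) : ℝ :=
  fderiv ℝ F x (0, Pi.single i 1)

/-- The standard Poisson bracket
`{F,G} = Σ i, (∂F/∂q_i · ∂G/∂p_i − ∂F/∂p_i · ∂G/∂q_i)`. -/
noncomputable def poisson {n : ℕ} (F G : Phase n → ℝ) (x : Phase n) : ℝ :=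
  ∑ i : Fin n, (pderivQ F i x * pderivP G i x - pderivP F i x * pderivQ G i x)

/-- `F ∈ C_c^∞(ℝ^{2n})`: smooth and compactly supported. -/
def SmoothCpt {n : ℕ} (F : Phase n → ℝ) : Prop :=
  ContDiff ℝ (⊤ : ℕ∞) F ∧ HasCompactSupport F

/-- The uniform (C⁰) norm `‖F‖ = sup_x |F x|`. -/
noncomputable def unif {n : ℕ} (F : Phase n → ℝ) : ℝ := ⨆ x, |F x|


/-!
Replace `F₁` by `F₁ ∘ (σ' × σ')` and `F₂, F₃` by `F₂ ∘ (σ × σ), F₃ ∘ (σ × σ)`, where `σ, σ'` are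
smooth staircases with step size below the moduli of uniform continuity of the `Fᵢ`, whose plateaus
are offset by half a step so that together they cover `ℝ`. At a point whose `p` or `q` coordinate
lies on a plateau of `σ`, the functions `F₂ ∘ (σ × σ)` and `F₃ ∘ (σ × σ)` locally depend on a single
variable, so their bracket vanishes near that point; otherwise both coordinates lie on plateaus of
`σ'` and `F₁ ∘ (σ' × σ')` is locally constant there. Either way the triple bracket vanishes.
-/

open Set Filter Topology
open scoped ContDiff

lemma eventuallyConst_nhds_iff {X β : Type*} [TopologicalSpace X] {f : X → β} {a : X} :
    EventuallyConst f (𝓝 a) ↔ f =ᶠ[𝓝 a] fun _ => f a := by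
  have : Nonempty β := ⟨f a⟩
  refine ⟨fun h => ?_, fun h => eventuallyConst_iff_exists_eventuallyEq.2 ⟨f a, h⟩⟩
  obtain ⟨c, hc⟩ := eventuallyConst_iff_exists_eventuallyEq.1 h
  rwa [hc.self_of_nhds]

lemma Filter.EventuallyConst.eventually_eventuallyConst_nhds {X β : Type*} [TopologicalSpace X]
    {f : X → β} {a : X} (h : EventuallyConst f (𝓝 a)) : ∀ᶠ y in 𝓝 a, EventuallyConst f (𝓝 y) := by
  rw [eventuallyConst_nhds_iff] at h
  filter_upwards [eventually_eventually_nhds.2 h, h] with y hy hya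
  exact eventuallyConst_nhds_iff.2 (by rw [hya]; exact hy)

lemma fderiv_eq_zero_of_eventuallyConst {E F : Type*} [NormedAddCommGroup E] [NormedSpace ℝ E]
    [NormedAddCommGroup F] [NormedSpace ℝ F] {f : E → F} {x : E}
    (h : EventuallyConst f (𝓝 x)) : fderiv ℝ f x = 0 := by
  rw [(eventuallyConst_nhds_iff.1 h).fderiv_eq, fderiv_const_apply]

lemma fderiv_apply_eq_zero_of_eventually_eq_along {E F : Type*} [NormedAddCommGroup E]
    [NormedSpace ℝ E] [NormedAddCommGroup F] [NormedSpace ℝ F] {f : E → F} {x v : E}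
    (h : (fun t : ℝ => f (x + t • v)) =ᶠ[𝓝 0] fun _ => f x) : fderiv ℝ f x v = 0 := by
  by_cases hf : DifferentiableAt ℝ f x
  · rw [← hf.lineDeriv_eq_fderiv, lineDeriv, h.deriv_eq, deriv_const]
  · rw [fderiv_zero_of_not_differentiableAt hf, zero_apply]

lemma HasCompactSupport.comp_of_dist_le {E β : Type*} [MetricSpace E] [ProperSpace E] [Zero β]
    {F : E → β} (hF : HasCompactSupport F) {Φ : E → E} {c : ℝ} (hΦ : ∀ z, dist (Φ z) z ≤ c) :
    HasCompactSupport (F ∘ Φ) := by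
  have hbdd : Bornology.IsBounded (Φ ⁻¹' tsupport F) := by
    obtain ⟨C, hC⟩ := Metric.isBounded_iff.1 hF.isBounded
    refine Metric.isBounded_iff.2 ⟨C + 2 * c, fun x hx y hy => ?_⟩
    have := dist_triangle4 x (Φ x) (Φ y) y
    linarith [hC hx hy, hΦ x, hΦ y, dist_comm x (Φ x)]
  refine .intro (Metric.isCompact_of_isClosed_isBounded isClosed_closure hbdd.closure)
    fun x hx => image_eq_zero_of_notMem_tsupport (f := F) fun h => hx (subset_closure h)

/-- Equal to `k` on `[k - 1/3, k + 1/3]` for every integer `k`. -/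
noncomputable def stair (u : ℝ) : ℝ := ⌊u⌋ + Real.smoothTransition (3 * Int.fract u - 1)

lemma stair_eq_of_mem_Ioo {v : ℝ} {k : ℤ} (h : v ∈ Ioo ((k : ℝ) - 1 / 3) (k + 1)) :
    stair v = k + Real.smoothTransition (3 * (v - k) - 1) := by
  obtain ⟨h₁, h₂⟩ := h
  rcases le_or_gt (k : ℝ) v with hk | hk
  · rw [stair, Int.fract, Int.floor_eq_iff.2 ⟨hk, h₂⟩]
  · have hfloor : ⌊v⌋ = k - 1 := Int.floor_eq_iff.2 ⟨by push_cast; linarith, by push_cast; linarith⟩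
    rw [stair, Int.fract, hfloor, Real.smoothTransition.one_of_one_le (by push_cast; linarith),
      Real.smoothTransition.zero_of_nonpos (by linarith)]
    push_cast
    ring

lemma contDiff_stair : ContDiff ℝ ∞ stair := by
  refine contDiff_iff_contDiffAt.2 fun u => ?_
  have hu : u ∈ Ioo ((⌊u⌋ : ℝ) - 1 / 3) (⌊u⌋ + 1) :=
    ⟨by linarith [Int.floor_le u], Int.lt_floor_add_one u⟩
  have hmodel : ContDiff ℝ ∞ fun v => (⌊u⌋ : ℝ) + Real.smoothTransition (3 * (v - ⌊u⌋) - 1) :=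
    contDiff_const.add (Real.smoothTransition.contDiff.comp (by fun_prop))
  refine hmodel.contDiffAt.congr_of_eventuallyEq ?_
  filter_upwards [isOpen_Ioo.mem_nhds hu] with v hv using stair_eq_of_mem_Ioo hv

lemma abs_stair_sub_le (u : ℝ) : |stair u - u| ≤ 1 := by
  have := Int.floor_le u
  have := Int.lt_floor_add_one u
  have := Real.smoothTransition.nonneg (3 * Int.fract u - 1)
  have := Real.smoothTransition.le_one (3 * Int.fract u - 1)
  rw [stair, abs_le]
  constructor <;> linarith

lemma stair_eventuallyConst {u : ℝ} {k : ℤ} (h : |u - k| < 1 / 3) :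
    EventuallyConst stair (𝓝 u) := by
  rw [abs_lt] at h
  have hu : u ∈ Ioo ((k : ℝ) - 1 / 3) (k + 1 / 3) := ⟨by linarith, by linarith⟩
  refine eventuallyConst_iff_exists_eventuallyEq.2 ⟨k, ?_⟩
  filter_upwards [isOpen_Ioo.mem_nhds hu] with v ⟨hv₁, hv₂⟩
  rw [stair_eq_of_mem_Ioo ⟨hv₁, by linarith⟩, Real.smoothTransition.zero_of_nonpos (by linarith),
    add_zero]

lemma stair_eventuallyConst_or (u : ℝ) :
    EventuallyConst stair (𝓝 u) ∨ EventuallyConst stair (𝓝 (u - 1 / 2)) := by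
  have h₀ := Int.floor_le u
  have h₁ := Int.lt_floor_add_one u
  rcases lt_or_ge (u - ⌊u⌋) (1 / 3) with h | h
  · exact .inl (stair_eventuallyConst (k := ⌊u⌋) (abs_lt.2 ⟨by linarith, h⟩))
  rcases lt_or_ge (2 / 3) (u - ⌊u⌋) with h' | h'
  · exact .inl (stair_eventuallyConst (k := ⌊u⌋ + 1) (abs_lt.2 ⟨by push_cast; linarith,
      by push_cast; linarith⟩))
  · exact .inr (stair_eventuallyConst (k := ⌊u⌋) (abs_lt.2 ⟨by linarith, by linarith⟩))

noncomputable def scaledStair (d s t : ℝ) : ℝ := d * (stair (t / d - s) + s)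

lemma contDiff_scaledStair (d s : ℝ) : ContDiff ℝ ∞ (scaledStair d s) := by
  unfold scaledStair
  have := contDiff_stair
  fun_prop

lemma abs_scaledStair_sub_le {d : ℝ} (hd : 0 < d) (s t : ℝ) : |scaledStair d s t - t| ≤ d := by
  have hrw : scaledStair d s t - t = d * (stair (t / d - s) - (t / d - s)) := by
    rw [scaledStair]
    field_simp
    ring
  rw [hrw, abs_mul, abs_of_pos hd]
  exact mul_le_of_le_one_right hd.le (abs_stair_sub_le _)

lemma scaledStair_eventuallyConst_or (d t : ℝ) :
    EventuallyConst (scaledStair d 0) (𝓝 t) ∨ EventuallyConst (scaledStair d (1 / 2)) (𝓝 t) := by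
  have hcomp (s : ℝ) (h : EventuallyConst stair (𝓝 (t / d - s))) :
      EventuallyConst (scaledStair d s) (𝓝 t) :=
    (h.comp_tendsto (by fun_prop : Continuous fun t => t / d - s).continuousAt).comp
      fun y => d * (y + s)
  rcases stair_eventuallyConst_or (t / d) with h | h
  · exact .inl (hcomp 0 (by rwa [sub_zero]))
  · exact .inr (hcomp _ h)

def mapCoords {n : ℕ} (σ : ℝ → ℝ) (z : Phase n) : Phase n := (σ ∘ z.1, σ ∘ z.2)

section mapCoords

variable {n : ℕ} {σ : ℝ → ℝ}

lemma dist_mapCoords_le {c : ℝ} (hσ : ∀ t, |σ t - t| ≤ c) (z : Phase n) :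
    dist (mapCoords σ z) z ≤ c := by
  have hc : 0 ≤ c := (abs_nonneg _).trans (hσ 0)
  have hcoord (w : Fin n → ℝ) : dist (σ ∘ w) w ≤ c :=
    (dist_pi_le_iff hc).2 fun i => (Real.dist_eq _ _).trans_le (hσ (w i))
  exact max_le (hcoord z.1) (hcoord z.2)

lemma contDiff_mapCoords {k : WithTop ℕ∞} (hσ : ContDiff ℝ k σ) :
    ContDiff ℝ k (mapCoords σ : Phase n → Phase n) :=
  (contDiff_pi.2 fun i => hσ.comp ((contDiff_apply ℝ ℝ i).comp contDiff_fst)).prodMk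
    (contDiff_pi.2 fun i => hσ.comp ((contDiff_apply ℝ ℝ i).comp contDiff_snd))

lemma SmoothCpt.comp_mapCoords {F : Phase n → ℝ} (hF : SmoothCpt F) (hσ : ContDiff ℝ ∞ σ)
    {c : ℝ} (hclose : ∀ t, |σ t - t| ≤ c) : SmoothCpt (F ∘ mapCoords σ) :=
  ⟨hF.1.comp (contDiff_mapCoords hσ), hF.2.comp_of_dist_le (dist_mapCoords_le hclose)⟩

lemma eventuallyConst_mapCoords {x : Phase n} (h₁ : ∀ i, EventuallyConst σ (𝓝 (x.1 i)))
    (h₂ : ∀ i, EventuallyConst σ (𝓝 (x.2 i))) : EventuallyConst (mapCoords σ) (𝓝 x) := by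
  have hcoord (f : Phase n → Fin n → ℝ) (hf : Continuous f)
      (h : ∀ i, EventuallyConst σ (𝓝 (f x i))) : EventuallyConst (fun z => σ ∘ f z) (𝓝 x) := by
    refine eventuallyConst_nhds_iff.2 ?_
    have : ∀ᶠ z in 𝓝 x, ∀ i, σ (f z i) = σ (f x i) := eventually_all.2 fun i =>
      ((continuous_apply i).comp hf).continuousAt.eventually (eventuallyConst_nhds_iff.1 (h i))
    filter_upwards [this] with z hz using funext hz
  exact (hcoord _ continuous_fst h₁).prodMk (hcoord _ continuous_snd h₂)

lemma comp_add_smul_single {w : Fin n → ℝ} {i : Fin n} {t : ℝ} (h : σ (w i + t) = σ (w i)) :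
    σ ∘ (w + t • Pi.single i 1) = σ ∘ w := by
  funext j
  rcases eq_or_ne j i with rfl | hji
  · simpa using h
  · simp [hji]

lemma pderivP_comp_mapCoords_eq_zero (F : Phase n → ℝ) {y : Phase n} {i : Fin n}
    (h : EventuallyConst σ (𝓝 (y.1 i))) : pderivP (F ∘ mapCoords σ) i y = 0 := by
  refine fderiv_apply_eq_zero_of_eventually_eq_along ?_
  have hline : Tendsto (fun t : ℝ => y.1 i + t) (𝓝 0) (𝓝 (y.1 i)) := by
    simpa using (continuous_const_add (y.1 i)).tendsto (0 : ℝ)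
  filter_upwards [hline.eventually (eventuallyConst_nhds_iff.1 h)] with t ht
  simp [mapCoords, comp_add_smul_single ht]

lemma pderivQ_comp_mapCoords_eq_zero (F : Phase n → ℝ) {y : Phase n} {i : Fin n}
    (h : EventuallyConst σ (𝓝 (y.2 i))) : pderivQ (F ∘ mapCoords σ) i y = 0 := by
  refine fderiv_apply_eq_zero_of_eventually_eq_along ?_
  have hline : Tendsto (fun t : ℝ => y.2 i + t) (𝓝 0) (𝓝 (y.2 i)) := by
    simpa using (continuous_const_add (y.2 i)).tendsto (0 : ℝ)
  filter_upwards [hline.eventually (eventuallyConst_nhds_iff.1 h)] with t ht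
  simp [mapCoords, comp_add_smul_single ht]

lemma poisson_comp_mapCoords_eventuallyEq_zero (F G : Phase n → ℝ) {x : Phase n}
    (h : (∀ i, EventuallyConst σ (𝓝 (x.1 i))) ∨ ∀ i, EventuallyConst σ (𝓝 (x.2 i))) :
    poisson (F ∘ mapCoords σ) (G ∘ mapCoords σ) =ᶠ[𝓝 x] 0 := by
  rcases h with h | h
  · have : ∀ᶠ y in 𝓝 x, ∀ i, EventuallyConst σ (𝓝 (y.1 i)) := eventually_all.2 fun i =>
      ((continuous_apply i).comp continuous_fst).continuousAt.eventually
        (h i).eventually_eventuallyConst_nhds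
    filter_upwards [this] with y hy
    simp [poisson, pderivP_comp_mapCoords_eq_zero _ (hy _)]
  · have : ∀ᶠ y in 𝓝 x, ∀ i, EventuallyConst σ (𝓝 (y.2 i)) := eventually_all.2 fun i =>
      ((continuous_apply i).comp continuous_snd).continuousAt.eventually
        (h i).eventually_eventuallyConst_nhds
    filter_upwards [this] with y hy
    simp [poisson, pderivQ_comp_mapCoords_eq_zero _ (hy _)]

end mapCoords

lemma poisson_eq_zero_of_eventuallyConst_left {n : ℕ} {F : Phase n → ℝ} {x : Phase n}
    (h : EventuallyConst F (𝓝 x)) (G : Phase n → ℝ) : poisson F G x = 0 := by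
  simp [poisson, pderivP, pderivQ, fderiv_eq_zero_of_eventuallyConst h]

lemma poisson_eq_zero_of_eventuallyConst_right {n : ℕ} (F : Phase n → ℝ) {G : Phase n → ℝ}
    {x : Phase n} (h : EventuallyConst G (𝓝 x)) : poisson F G x = 0 := by
  simp [poisson, pderivP, pderivQ, fderiv_eq_zero_of_eventuallyConst h]

theorem poisson_poisson_comp_mapCoords_eq_zero {σ σ' : ℝ → ℝ}
    (hcover : ∀ t, EventuallyConst σ (𝓝 t) ∨ EventuallyConst σ' (𝓝 t))
    (F₁ F₂ F₃ : Phase 1 → ℝ) (x : Phase 1) :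
    poisson (F₁ ∘ mapCoords σ') (poisson (F₂ ∘ mapCoords σ) (F₃ ∘ mapCoords σ)) x = 0 := by
  by_cases hσ : EventuallyConst σ (𝓝 (x.1 0)) ∨ EventuallyConst σ (𝓝 (x.2 0))
  · refine poisson_eq_zero_of_eventuallyConst_right _ ((EventuallyConst.const 0).congr ?_)
    exact (poisson_comp_mapCoords_eventuallyEq_zero F₂ F₃ (by simpa [Fin.forall_fin_one])).symm
  · rw [not_or] at hσ
    refine poisson_eq_zero_of_eventuallyConst_left ((eventuallyConst_mapCoords ?_ ?_).comp F₁) _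
    · simpa [Fin.forall_fin_one] using (hcover _).resolve_left hσ.1
    · simpa [Fin.forall_fin_one] using (hcover _).resolve_left hσ.2

lemma exists_pos_forall_unif_comp_sub_lt {n : ℕ} {F : Phase n → ℝ} (hF : UniformContinuous F)
    {ε : ℝ} (hε : 0 < ε) :
    ∃ δ > 0, ∀ Φ : Phase n → Phase n, (∀ z, dist (Φ z) z ≤ δ) →
      unif (fun z => F (Φ z) - F z) < ε := by
  obtain ⟨δ, hδ, hFδ⟩ := Metric.uniformContinuous_iff.1 hF (ε / 2) (half_pos hε)
  refine ⟨δ / 2, half_pos hδ, fun Φ hΦ => ?_⟩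
  calc unif (fun z => F (Φ z) - F z) ≤ ε / 2 :=
        Real.iSup_le (fun z => (hFδ ((hΦ z).trans_lt (half_lt_self hδ))).le) (half_pos hε).le
    _ < ε := half_lt_self hε

/-- **Failure of C⁰-rigidity for multiple brackets in dimension two.** Any three functions
in `C_c^∞(ℝ²)` admit arbitrarily uniformly-close smooth compactly supported perturbations
whose triple Poisson bracket vanishes identically. Here `ℝ² = Phase 1`. -/
theorem triple_bracket_flexible_dim_two (F₁ F₂ F₃ : Phase 1 → ℝ)
    (h₁ : SmoothCpt F₁) (h₂ : SmoothCpt F₂) (h₃ : SmoothCpt F₃)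
    (ε : ℝ) (hε : 0 < ε) :
    ∃ F₁' F₂' F₃' : Phase 1 → ℝ,
      SmoothCpt F₁' ∧ SmoothCpt F₂' ∧ SmoothCpt F₃' ∧
      unif (fun x => F₁' x - F₁ x) < ε ∧
      unif (fun x => F₂' x - F₂ x) < ε ∧
      unif (fun x => F₃' x - F₃ x) < ε ∧
      ∀ x, poisson F₁' (poisson F₂' F₃') x = 0 := by
  obtain ⟨δ₁, hδ₁, hF₁⟩ :=
    exists_pos_forall_unif_comp_sub_lt (h₁.2.uniformContinuous_of_continuous h₁.1.continuous) hε
  obtain ⟨δ₂, hδ₂, hF₂⟩ :=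
    exists_pos_forall_unif_comp_sub_lt (h₂.2.uniformContinuous_of_continuous h₂.1.continuous) hε
  obtain ⟨δ₃, hδ₃, hF₃⟩ :=
    exists_pos_forall_unif_comp_sub_lt (h₃.2.uniformContinuous_of_continuous h₃.1.continuous) hε
  set d := min δ₁ (min δ₂ δ₃)
  have hd : 0 < d := lt_min hδ₁ (lt_min hδ₂ hδ₃)
  have hclose (s : ℝ) (z : Phase 1) : dist (mapCoords (scaledStair d s) z) z ≤ d :=
    dist_mapCoords_le (abs_scaledStair_sub_le hd s) z
  have hsmooth {F : Phase 1 → ℝ} (hF : SmoothCpt F) (s : ℝ) :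
      SmoothCpt (F ∘ mapCoords (scaledStair d s)) :=
    hF.comp_mapCoords (contDiff_scaledStair d s) (abs_scaledStair_sub_le hd s)
  refine ⟨F₁ ∘ mapCoords (scaledStair d (1 / 2)), F₂ ∘ mapCoords (scaledStair d 0),
    F₃ ∘ mapCoords (scaledStair d 0), hsmooth h₁ _, hsmooth h₂ _, hsmooth h₃ _,
    hF₁ _ fun z => (hclose _ z).trans (min_le_left _ _),
    hF₂ _ fun z => (hclose _ z).trans ((min_le_right _ _).trans (min_le_left _ _)),
    hF₃ _ fun z => (hclose _ z).trans ((min_le_right _ _).trans (min_le_right _ _)),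
    poisson_poisson_comp_mapCoords_eq_zero (scaledStair_eventuallyConst_or d) F₁ F₂ F₃⟩
end

section
/- (Non-rigidity of the triple bracket.) For every n ≥ 1 there exist functions F, G, H ∈ C_c^∞(ℝ^{2n}) with {F, {G, H}} not identically zero such that for every ε > 0 there exist F', G', H' ∈ C_c^∞(ℝ^{2n}) with ‖F' − F‖ < ε, ‖G' − G‖ < ε, ‖H' − H‖ < ε and {F', {G', H'}} ≡ 0. -/
/-!
Pull everything back along `x ↦ (a, b, w) = (p₀, q₀, ∑_{j ≠ 0} (p_j² + q_j²))`. Since `w`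
Poisson-commutes with `p₀` and `q₀`, brackets of such functions are brackets in the `(a, b)`-plane
with `w` as a parameter. With `s = a² + b²` and cutoffs `β`, `γ`, `c`, take `F = β(s) c(w)`,
`G = a²/2 · γ(s) c(w)` and `H = b²/2 · γ(s) c(w)`: where `γ = c = 1` one has `{G, H} = -ab`, so
`{F, {G, H}} = 2 β'(s) (a² - b²)`, which is nonzero somewhere.

For the perturbation, replace `s` by smooth staircases, `τ(s)` in `F` and `W(s)` in `G` and `H`
(together with `a²` by `a² W(s)/s`); both are `1/K`-close to the identity, and they rise over
disjoint sets of radii. Where `τ` is locally constant, `F'` depends on `w` alone; where `W` is,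
`G'` and `H'` depend only on the polar angle and `w`, so `{G', H'} = 0`. Either way
`{F', {G', H'}} = 0`.
-/

open Real Filter Topology Finset
open scoped ContDiff

namespace TripleBracket

noncomputable section

def cutoff (r s : ℝ) : ℝ := 1 - smoothTransition (s - r)

lemma cutoff_of_le {r s : ℝ} (h : s ≤ r) : cutoff r s = 1 := by
  simp [cutoff, smoothTransition.zero_of_nonpos (sub_nonpos.2 h)]

lemma cutoff_of_ge {r s : ℝ} (h : r + 1 ≤ s) : cutoff r s = 0 := by
  simp [cutoff, smoothTransition.one_of_one_le (le_sub_iff_add_le'.2 h)]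

lemma abs_cutoff_le_one (r s : ℝ) : |cutoff r s| ≤ 1 := by
  rw [cutoff, abs_le]
  constructor <;> linarith [smoothTransition.nonneg (s - r), smoothTransition.le_one (s - r)]

lemma contDiff_cutoff (r : ℝ) : ContDiff ℝ ∞ (cutoff r) :=
  contDiff_const.sub (smoothTransition.contDiff.comp (contDiff_id.sub contDiff_const))

lemma exists_lipschitzWith_smoothTransition : ∃ L, LipschitzWith L smoothTransition := by
  set f : ℝ → ℝ := fun x => smoothTransition x * smoothTransition (3 - x)
  have hf : HasCompactSupport f := by
    refine HasCompactSupport.intro (K := Set.Icc 0 3) isCompact_Icc fun x hx => ?_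
    rcases not_and_or.1 hx with h | h
    · simp [f, smoothTransition.zero_of_nonpos (not_le.1 h).le]
    · simp [f, smoothTransition.zero_of_nonpos (by linarith [not_le.1 h] : 3 - x ≤ 0)]
  obtain ⟨L, hL⟩ := ContDiff.lipschitzWith_of_hasCompactSupport (n := 1) hf
    (smoothTransition.contDiff.mul (smoothTransition.contDiff.comp
      (contDiff_const.sub contDiff_id))) one_ne_zero
  -- `smoothTransition` factors through the projection onto `[0, 1]`, where it agrees with `f`.
  have hfactor : smoothTransition = f ∘ Subtype.val ∘ Set.projIcc (0 : ℝ) 1 zero_le_one := by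
    funext x
    have hx : (Set.projIcc (0 : ℝ) 1 zero_le_one x : ℝ) ≤ 1 := (Set.projIcc _ _ _ x).2.2
    simp [f, smoothTransition.one_of_one_le (by linarith : (1 : ℝ) ≤ 3 - _)]
  rw [hfactor]
  exact ⟨_, hL.comp ((LipschitzWith.subtype_val _).comp (LipschitzWith.projIcc zero_le_one))⟩

lemma exists_lipschitzWith_cutoff : ∃ L, ∀ r, LipschitzWith L (cutoff r) := by
  obtain ⟨L, hL⟩ := exists_lipschitzWith_smoothTransition
  refine ⟨L, fun r => LipschitzWith.of_dist_le_mul fun u v => ?_⟩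
  calc dist (cutoff r u) (cutoff r v)
      = dist (smoothTransition (u - r)) (smoothTransition (v - r)) := by
        rw [Real.dist_eq, Real.dist_eq, abs_sub_comm, cutoff, cutoff]; congr 1; ring
    _ ≤ L * dist (u - r) (v - r) := hL.dist_le_mul _ _
    _ = L * dist u v := by rw [dist_sub_right]

lemma exists_deriv_cutoff_eq_neg_one (r : ℝ) :
    ∃ s ∈ Set.Ioo r (r + 1), deriv (cutoff r) s = -1 := by
  obtain ⟨s, hs, h⟩ := exists_deriv_eq_slope (cutoff r) (lt_add_one r)
    (contDiff_cutoff r).continuous.continuousOn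
    ((contDiff_cutoff r).differentiable (by simp)).differentiableOn
  rw [cutoff_of_ge le_rfl, cutoff_of_le le_rfl] at h
  exact ⟨s, hs, by simpa using h⟩

structure IsStep (σ : ℝ → ℝ) (a b : ℝ) : Prop where
  eq_zero : ∀ t ≤ a, σ t = 0
  eq_one : ∀ t, b ≤ t → σ t = 1
  mem_Icc : ∀ t, σ t ∈ Set.Icc 0 1

def staircase (σ : ℝ → ℝ) (K M : ℕ) (s : ℝ) : ℝ :=
  (K : ℝ)⁻¹ * ∑ i ∈ range (M * K), σ (K * s - i)

section Staircase

variable {σ : ℝ → ℝ} {a b : ℝ} {K M : ℕ} {s : ℝ}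

lemma contDiff_staircase (hσ : ContDiff ℝ ∞ σ) : ContDiff ℝ ∞ (staircase σ K M) :=
  contDiff_const.mul <| ContDiff.sum fun _ _ =>
    hσ.comp ((contDiff_const.mul contDiff_id).sub contDiff_const)

lemma staircase_of_le (hσ : IsStep σ a b) (hs : K * s ≤ a) : staircase σ K M s = 0 := by
  rw [staircase, sum_eq_zero fun i _ => hσ.eq_zero _ (by linarith [i.cast_nonneg (α := ℝ)]),
    mul_zero]

lemma staircase_of_ge (hσ : IsStep σ a b) (hb : b ≤ 1) (hK : K ≠ 0) (hs : M ≤ s) :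
    staircase σ K M s = M := by
  have hterm : ∀ i ∈ range (M * K), σ (K * s - i) = 1 := fun i hi => by
    have hi : (i : ℝ) + 1 ≤ M * K := by exact_mod_cast mem_range.1 hi
    exact hσ.eq_one _ (by nlinarith [K.cast_nonneg (α := ℝ)])
  rw [staircase, sum_congr rfl hterm]
  simp [field]

lemma IsStep.abs_sum_sub_le (hσ : IsStep σ a b) (ha : 0 ≤ a) (hb : b ≤ 1) {N : ℕ} {x : ℝ}
    (hx : x ∈ Set.Icc 0 (N : ℝ)) : |∑ i ∈ range N, σ (x - i) - x| ≤ 1 := by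
  set k := ⌊x⌋₊
  have hkx : (k : ℝ) ≤ x := Nat.floor_le hx.1
  have hxk : x < k + 1 := Nat.lt_floor_add_one x
  have hkN : k ≤ N := Nat.floor_le_of_le hx.2
  have hlow : ∑ i ∈ range k, σ (x - i) = k := by
    rw [sum_congr rfl fun i hi => hσ.eq_one _ ?_]
    · simp
    · have : (i : ℝ) + 1 ≤ k := by exact_mod_cast mem_range.1 hi
      linarith
  have hhigh : ∑ i ∈ Ico k N, σ (x - i) ∈ Set.Icc 0 1 := by
    rcases hkN.eq_or_lt with hk | hk
    · simp [hk]
    rw [sum_eq_sum_Ico_succ_bot hk, sum_eq_zero fun i hi => hσ.eq_zero _ ?_, add_zero]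
    · exact hσ.mem_Icc _
    · have : (k : ℝ) + 1 ≤ i := by exact_mod_cast (mem_Ico.1 hi).1
      linarith
  rw [← sum_range_add_sum_Ico _ hkN, hlow, abs_le]
  constructor <;> linarith [hhigh.1, hhigh.2]

lemma abs_staircase_sub_le (hσ : IsStep σ a b) (ha : 0 ≤ a) (hb : b ≤ 1) (hK : K ≠ 0)
    (hs : s ∈ Set.Icc 0 (M : ℝ)) : |staircase σ K M s - s| ≤ (K : ℝ)⁻¹ := by
  have hK' : (0 : ℝ) < (K : ℝ)⁻¹ := by positivity
  have h := hσ.abs_sum_sub_le ha hb (N := M * K) (x := K * s)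
    ⟨by nlinarith [hs.1], by push_cast; nlinarith [hs.2]⟩
  have hscale : staircase σ K M s - s =
      (K : ℝ)⁻¹ * (∑ i ∈ range (M * K), σ (K * s - i) - K * s) := by
    rw [staircase]; field_simp
  rw [hscale, abs_mul, abs_of_pos hK']
  exact mul_le_of_le_one_right hK'.le h

lemma staircase_eventuallyEq (hσ : IsStep σ a b) (j : ℤ)
    (hs : K * s ∈ Set.Ioo (j + b) (j + 1 + a)) :
    staircase σ K M =ᶠ[𝓝 s] fun _ => staircase σ K M s := by
  have hterm : ∀ s' : ℝ, K * s' ∈ Set.Ioo (j + b) (j + 1 + a) → ∀ i : ℕ,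
      σ (K * s' - i) = if (i : ℤ) ≤ j then 1 else 0 := by
    intro s' hs' i
    split_ifs with hij
    · have : (i : ℝ) ≤ j := by exact_mod_cast hij
      exact hσ.eq_one _ (by linarith [hs'.1])
    · have : (j : ℝ) + 1 ≤ i := by exact_mod_cast (by omega : j + 1 ≤ (i : ℤ))
      exact hσ.eq_zero _ (by linarith [hs'.2])
  have hopen : IsOpen {s' : ℝ | K * s' ∈ Set.Ioo (j + b) (j + 1 + a)} :=
    isOpen_Ioo.preimage (continuous_const.mul continuous_id)
  filter_upwards [hopen.mem_nhds hs] with s' hs'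
  simp only [staircase, hterm s' hs', hterm s hs]

end Staircase

def step (c t : ℝ) : ℝ := smoothTransition (4 * t - c)

lemma isStep_step (c : ℝ) : IsStep (step c) (c / 4) ((c + 1) / 4) where
  eq_zero _ _ := smoothTransition.zero_of_nonpos (by linarith)
  eq_one _ _ := smoothTransition.one_of_one_le (by linarith)
  mem_Icc _ := ⟨smoothTransition.nonneg _, smoothTransition.le_one _⟩

lemma contDiff_step (c : ℝ) : ContDiff ℝ ∞ (step c) :=
  smoothTransition.contDiff.comp ((contDiff_const.mul contDiff_id).sub contDiff_const)

def stairF (K : ℕ) : ℝ → ℝ := staircase (step 1) K 3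

def stairGH (K : ℕ) : ℝ → ℝ := staircase (step 3) K 3

section Stairs

variable {K : ℕ} {s : ℝ}

lemma contDiff_stairF : ContDiff ℝ ∞ (stairF K) := contDiff_staircase (contDiff_step 1)

lemma contDiff_stairGH : ContDiff ℝ ∞ (stairGH K) := contDiff_staircase (contDiff_step 3)

lemma stairF_of_ge (hK : K ≠ 0) (hs : 3 ≤ s) : stairF K s = 3 := by
  simpa [stairF] using staircase_of_ge (M := 3) (isStep_step 1) (by norm_num) hK
    (by exact_mod_cast hs)

lemma stairGH_of_ge (hK : K ≠ 0) (hs : 3 ≤ s) : stairGH K s = 3 := by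
  simpa [stairGH] using staircase_of_ge (M := 3) (isStep_step 3) (by norm_num) hK
    (by exact_mod_cast hs)

lemma abs_stairF_sub_le (hK : K ≠ 0) (hs : s ∈ Set.Icc 0 3) : |stairF K s - s| ≤ (K : ℝ)⁻¹ :=
  abs_staircase_sub_le (isStep_step 1) (by norm_num) (by norm_num) hK (by exact_mod_cast hs)

lemma abs_stairGH_sub_le (hK : K ≠ 0) (hs : s ∈ Set.Icc 0 3) :
    |stairGH K s - s| ≤ (K : ℝ)⁻¹ :=
  abs_staircase_sub_le (isStep_step 3) (by norm_num) (by norm_num) hK (by exact_mod_cast hs)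

/-- `stairF K` rises where the fractional part of `K * s` lies in `[1/4, 1/2]`, `stairGH K` where
it lies in `[3/4, 1]`. -/
lemma stairF_or_stairGH_eventuallyEq (K : ℕ) (s : ℝ) :
    (stairF K =ᶠ[𝓝 s] fun _ => stairF K s) ∨
      (s ≠ 0 ∧ stairGH K =ᶠ[𝓝 s] fun _ => stairGH K s) := by
  set j := ⌊(K : ℝ) * s⌋
  have hj : (j : ℝ) ≤ K * s := Int.floor_le _
  have hj' : (K : ℝ) * s < j + 1 := Int.lt_floor_add_one _
  by_cases h1 : (K : ℝ) * s < j + 1 / 4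
  · exact .inl <| staircase_eventuallyEq (isStep_step 1) (j - 1)
      ⟨by push_cast; linarith, by push_cast; linarith⟩
  by_cases h2 : j + 3 / 4 ≤ (K : ℝ) * s
  · exact .inl <| staircase_eventuallyEq (isStep_step 1) j ⟨by linarith, by linarith⟩
  refine .inr ⟨?_, staircase_eventuallyEq (isStep_step 3) (j - 1)
    ⟨by push_cast; linarith, by push_cast; linarith⟩⟩
  rintro rfl
  simp [j] at h1

end Stairs

def ghRatio (K : ℕ) (s : ℝ) : ℝ := stairGH K s / s

lemma ghRatio_mul_self (K : ℕ) (s : ℝ) : ghRatio K s * s = stairGH K s := by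
  rcases eq_or_ne s 0 with rfl | hs
  · simp [ghRatio, stairGH, staircase_of_le (isStep_step 3) (by norm_num : (K : ℝ) * 0 ≤ 3 / 4)]
  · exact div_mul_cancel₀ _ hs

lemma contDiff_ghRatio (K : ℕ) : ContDiff ℝ ∞ (ghRatio K) := by
  refine contDiff_iff_contDiffAt.2 fun s => ?_
  rcases lt_or_ge ((K : ℝ) * s) (3 / 4) with hs | hs
  · refine (contDiffAt_const (c := (0 : ℝ))).congr_of_eventuallyEq ?_
    have hopen : IsOpen {s' : ℝ | (K : ℝ) * s' < 3 / 4} :=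
      isOpen_lt (continuous_const.mul continuous_id) continuous_const
    filter_upwards [hopen.mem_nhds hs] with s' hs'
    simp [ghRatio, stairGH, staircase_of_le (isStep_step 3) hs'.le]
  · have hs0 : s ≠ 0 := by rintro rfl; norm_num at hs
    exact contDiff_stairGH.contDiffAt.div contDiffAt_id hs0

abbrev R3 := ℝ × ℝ × ℝ

def radiusSq (y : R3) : ℝ := y.1 ^ 2 + y.2.1 ^ 2

/-- The Poisson bracket of the `(a, b)`-plane, `w` being a parameter. -/
def planeBracket (f g : R3 → ℝ) (y : R3) : ℝ :=
  fderiv ℝ f y (0, 1, 0) * fderiv ℝ g y (1, 0, 0) - fderiv ℝ f y (1, 0, 0) * fderiv ℝ g y (0, 1, 0)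

section PlaneBracket

variable {f g f' g' : R3 → ℝ} {y : R3}

lemma hasFDerivAt_coordA (y : R3) :
    HasFDerivAt (fun z : R3 => z.1) (ContinuousLinearMap.fst ℝ ℝ (ℝ × ℝ)) y :=
  hasFDerivAt_fst

lemma hasFDerivAt_coordB (y : R3) : HasFDerivAt (fun z : R3 => z.2.1)
    ((ContinuousLinearMap.fst ℝ ℝ ℝ).comp (ContinuousLinearMap.snd ℝ ℝ (ℝ × ℝ))) y :=
  hasFDerivAt_snd.fst

lemma hasFDerivAt_coordW {φ : ℝ → ℝ} (hφ : DifferentiableAt ℝ φ y.2.2) :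
    HasFDerivAt (fun z : R3 => φ z.2.2) ((fderiv ℝ φ y.2.2).comp
      ((ContinuousLinearMap.snd ℝ ℝ ℝ).comp (ContinuousLinearMap.snd ℝ ℝ (ℝ × ℝ)))) y :=
  hφ.hasFDerivAt.comp y hasFDerivAt_snd.snd

lemma contDiff_radiusSq : ContDiff ℝ ∞ radiusSq :=
  (contDiff_fst.pow 2).add (contDiff_snd.fst.pow 2)

lemma radiusSq_nonneg (y : R3) : 0 ≤ radiusSq y := by unfold radiusSq; positivity

lemma sq_fst_le_radiusSq (y : R3) : y.1 ^ 2 ≤ radiusSq y :=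
  le_add_of_nonneg_right (sq_nonneg _)

lemma sq_snd_fst_le_radiusSq (y : R3) : y.2.1 ^ 2 ≤ radiusSq y :=
  le_add_of_nonneg_left (sq_nonneg _)

lemma hasFDerivAt_radiusSq (y : R3) : HasFDerivAt radiusSq
    ((2 * y.1) • ContinuousLinearMap.fst ℝ ℝ (ℝ × ℝ) + (2 * y.2.1) •
      (ContinuousLinearMap.fst ℝ ℝ ℝ).comp (ContinuousLinearMap.snd ℝ ℝ (ℝ × ℝ))) y :=
  (((hasFDerivAt_coordA y).pow 2).add ((hasFDerivAt_coordB y).pow 2)).congr_fderiv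
    (by ext <;> simp)

lemma planeBracket_congr (hf : f =ᶠ[𝓝 y] f') (hg : g =ᶠ[𝓝 y] g') :
    planeBracket f g y = planeBracket f' g' y := by
  simp only [planeBracket, hf.fderiv_eq, hg.fderiv_eq]

lemma planeBracket_eq_of_hasFDerivAt {L M : R3 →L[ℝ] ℝ} (hf : HasFDerivAt f L y)
    (hg : HasFDerivAt g M y) :
    planeBracket f g y = L (0, 1, 0) * M (1, 0, 0) - L (1, 0, 0) * M (0, 1, 0) := by
  rw [planeBracket, hf.fderiv, hg.fderiv]

lemma contDiff_planeBracket (hf : ContDiff ℝ ∞ f) (hg : ContDiff ℝ ∞ g) :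
    ContDiff ℝ ∞ (planeBracket f g) := by
  have hf' := hf.fderiv_right (m := ∞) le_rfl
  have hg' := hg.fderiv_right (m := ∞) le_rfl
  exact ((hf'.clm_apply contDiff_const).mul (hg'.clm_apply contDiff_const)).sub
    ((hf'.clm_apply contDiff_const).mul (hg'.clm_apply contDiff_const))

lemma planeBracket_eq_zero_of_eventuallyEq_comp_snd_snd {φ : ℝ → ℝ}
    (hφ : DifferentiableAt ℝ φ y.2.2) (hf : f =ᶠ[𝓝 y] fun z => φ z.2.2) :
    planeBracket f g y = 0 := by
  rw [planeBracket_congr hf (EventuallyEq.refl _ g), planeBracket, (hasFDerivAt_coordW hφ).fderiv]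
  simp

lemma planeBracket_eq_zero_of_eventuallyEq_zero (hg : g =ᶠ[𝓝 y] 0) :
    planeBracket f g y = 0 := by
  rw [planeBracket_congr (EventuallyEq.refl _ f) hg, planeBracket]
  simp

lemma planeBracket_angular_eq_zero (k : ℝ) {φ : ℝ → ℝ} (hφ : DifferentiableAt ℝ φ y.2.2)
    (hy : radiusSq y ≠ 0) :
    planeBracket (fun z => k * (z.1 ^ 2 / radiusSq z) * φ z.2.2)
      (fun z => k * (z.2.1 ^ 2 / radiusSq z) * φ z.2.2) y = 0 := by
  have hinv : HasFDerivAt (fun z => (radiusSq z)⁻¹) _ y :=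
    (hasDerivAt_inv hy).comp_hasFDerivAt y (hasFDerivAt_radiusSq y)
  simp only [div_eq_mul_inv]
  refine (planeBracket_eq_of_hasFDerivAt
    ((((hasFDerivAt_coordA y).pow 2).mul hinv).const_mul k |>.mul (hasFDerivAt_coordW hφ))
    ((((hasFDerivAt_coordB y).pow 2).mul hinv).const_mul k |>.mul (hasFDerivAt_coordW hφ))).trans ?_
  simp
  field_simp
  unfold radiusSq
  ring

end PlaneBracket

/-- `modelF id`, `modelGH 1 id Prod.fst` and `modelGH 1 id (·.2.1)` are `F`, `G` and `H`; the
perturbations are `modelF (stairF K)` and `modelGH (ghRatio K) (stairGH K) _`. -/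
def modelF (T : ℝ → ℝ) (y : R3) : ℝ := cutoff 1 (T (radiusSq y)) * cutoff 1 y.2.2

def modelGH (ρ R : ℝ → ℝ) (u : R3 → ℝ) (y : R3) : ℝ :=
  ρ (radiusSq y) * (u y ^ 2 / 2) * cutoff 2 (R (radiusSq y)) * cutoff 1 y.2.2

section Models

variable {T ρ R : ℝ → ℝ} {u : R3 → ℝ} {y : R3}

lemma contDiff_modelF (hT : ContDiff ℝ ∞ T) : ContDiff ℝ ∞ (modelF T) :=
  ((contDiff_cutoff 1).comp (hT.comp contDiff_radiusSq)).mul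
    ((contDiff_cutoff 1).comp contDiff_snd.snd)

lemma contDiff_modelGH (hρ : ContDiff ℝ ∞ ρ) (hR : ContDiff ℝ ∞ R) (hu : ContDiff ℝ ∞ u) :
    ContDiff ℝ ∞ (modelGH ρ R u) :=
  (((hρ.comp contDiff_radiusSq).mul ((hu.pow 2).div_const 2)).mul
    ((contDiff_cutoff 2).comp (hR.comp contDiff_radiusSq))).mul
    ((contDiff_cutoff 1).comp contDiff_snd.snd)

lemma modelF_eq_zero (hT : ∀ s, 3 ≤ s → 2 ≤ T s) (hy : 3 ≤ radiusSq y ∨ 2 ≤ y.2.2) :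
    modelF T y = 0 := by
  rcases hy with hy | hy
  · rw [modelF, cutoff_of_ge (by linarith [hT _ hy]), zero_mul]
  · rw [modelF, cutoff_of_ge (s := y.2.2) (by linarith), mul_zero]

lemma modelGH_eq_zero (hR : ∀ s, 3 ≤ s → 3 ≤ R s) (hy : 3 ≤ radiusSq y ∨ 2 ≤ y.2.2) :
    modelGH ρ R u y = 0 := by
  rcases hy with hy | hy
  · rw [modelGH, cutoff_of_ge (by linarith [hR _ hy]), mul_zero, zero_mul]
  · rw [modelGH, cutoff_of_ge (s := y.2.2) (by linarith), mul_zero]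

lemma abs_modelF_sub_le {L : NNReal} (hL : LipschitzWith L (cutoff 1)) {δ : ℝ}
    (hT : ∀ s ∈ Set.Icc 0 3, |T s - s| ≤ δ) (hT3 : ∀ s, 3 ≤ s → 2 ≤ T s) (y : R3) :
    |modelF T y - modelF id y| ≤ L * δ := by
  set s := radiusSq y
  have hδ : 0 ≤ δ := (abs_nonneg _).trans (hT 0 ⟨le_rfl, by norm_num⟩)
  have key : |cutoff 1 (T s) - cutoff 1 s| ≤ L * δ := by
    rcases le_or_gt s 3 with hs | hs
    · calc |cutoff 1 (T s) - cutoff 1 s| ≤ L * |T s - s| := by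
            simpa [Real.dist_eq] using hL.dist_le_mul (T s) s
        _ ≤ L * δ := by gcongr; exact hT s ⟨radiusSq_nonneg y, hs⟩
    · rw [cutoff_of_ge (by linarith [hT3 s hs.le]), cutoff_of_ge (by linarith), sub_self,
        abs_zero]
      positivity
  calc |modelF T y - modelF id y| = |cutoff 1 (T s) - cutoff 1 s| * |cutoff 1 y.2.2| := by
        rw [← abs_mul, modelF, modelF, id, sub_mul]
    _ ≤ L * δ * 1 := by gcongr; exact abs_cutoff_le_one 1 _
    _ = L * δ := mul_one _

lemma abs_mul_cutoff_sub_le {L : NNReal} (hL : LipschitzWith L (cutoff 2)) {A s ρ R δ : ℝ}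
    (hA : 0 ≤ A) (hAs : A ≤ s / 2) (hs : s ≤ 3) (hρ : ρ * s = R) (hR : |R - s| ≤ δ) :
    |A * (ρ * cutoff 2 R - cutoff 2 s)| ≤ (1 + 3 * L) / 2 * δ := by
  have h1 : |A * (ρ - 1)| ≤ δ / 2 := by
    calc |A * (ρ - 1)| ≤ s / 2 * |ρ - 1| := by
          rw [abs_mul, abs_of_nonneg hA]; gcongr
      _ = |R - s| / 2 := by
          rw [← hρ, show ρ * s - s = (ρ - 1) * s by ring, abs_mul,
            abs_of_nonneg (show 0 ≤ s by linarith)]; ring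
      _ ≤ δ / 2 := by gcongr
  have h2 : |A * (cutoff 2 R - cutoff 2 s)| ≤ 3 * L / 2 * δ := by
    calc |A * (cutoff 2 R - cutoff 2 s)| ≤ 3 / 2 * (L * |R - s|) := by
          rw [abs_mul, abs_of_nonneg hA]
          gcongr
          · linarith
          · simpa [Real.dist_eq] using hL.dist_le_mul R s
      _ ≤ 3 / 2 * (L * δ) := by gcongr
      _ = 3 * L / 2 * δ := by ring
  calc |A * (ρ * cutoff 2 R - cutoff 2 s)|
      = |A * (ρ - 1) * cutoff 2 R + A * (cutoff 2 R - cutoff 2 s)| := by ring_nf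
    _ ≤ δ / 2 * 1 + 3 * L / 2 * δ := by
        refine (abs_add_le _ _).trans (add_le_add ?_ h2)
        rw [abs_mul]
        exact mul_le_mul h1 (abs_cutoff_le_one 2 _) (abs_nonneg _)
          (by linarith [(abs_nonneg _).trans hR])
    _ = (1 + 3 * L) / 2 * δ := by ring

lemma abs_modelGH_sub_le {L : NNReal} (hL : LipschitzWith L (cutoff 2)) {δ : ℝ}
    (hρ : ∀ s, ρ s * s = R s) (hR : ∀ s ∈ Set.Icc 0 3, |R s - s| ≤ δ)
    (hR3 : ∀ s, 3 ≤ s → 3 ≤ R s) (hu : u y ^ 2 ≤ radiusSq y) :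
    |modelGH ρ R u y - modelGH 1 id u y| ≤ (1 + 3 * L) / 2 * δ := by
  set s := radiusSq y
  set A := u y ^ 2 / 2
  have hδ : 0 ≤ δ := (abs_nonneg _).trans (hR 0 ⟨le_rfl, by norm_num⟩)
  have key : |A * (ρ s * cutoff 2 (R s) - cutoff 2 s)| ≤ (1 + 3 * L) / 2 * δ := by
    rcases le_or_gt s 3 with hs | hs
    · exact abs_mul_cutoff_sub_le hL (by positivity) (by simp only [A]; linarith) hs (hρ s)
        (hR s ⟨radiusSq_nonneg y, hs⟩)
    · rw [cutoff_of_ge (by linarith [hR3 s hs.le]), cutoff_of_ge (by linarith), mul_zero,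
        sub_self, mul_zero, abs_zero]
      positivity
  calc |modelGH ρ R u y - modelGH 1 id u y|
      = |A * (ρ s * cutoff 2 (R s) - cutoff 2 s)| * |cutoff 1 y.2.2| := by
        rw [← abs_mul]; simp only [modelGH, Pi.one_apply, id, s, A]; ring_nf
    _ ≤ (1 + 3 * L) / 2 * δ * 1 := by gcongr; exact abs_cutoff_le_one 1 _
    _ = (1 + 3 * L) / 2 * δ := mul_one _

lemma modelGH_eq_angular (hρ : ∀ s, ρ s * s = R s) (u : R3 → ℝ) (hy : radiusSq y ≠ 0) :
    modelGH ρ R u y = R (radiusSq y) * cutoff 2 (R (radiusSq y)) / 2 *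
      (u y ^ 2 / radiusSq y) * cutoff 1 y.2.2 := by
  rw [modelGH, ← hρ]
  field_simp

lemma eventually_radiusSq_lt_and_lt {r c : ℝ} (hy : radiusSq y < r) (hw : y.2.2 < c) :
    ∀ᶠ z in 𝓝 y, radiusSq z < r ∧ z.2.2 < c :=
  (contDiff_radiusSq.continuous.continuousAt.eventually_lt continuousAt_const hy).and
    (continuous_snd.snd.continuousAt.eventually_lt continuousAt_const hw)

lemma planeBracket_modelGH_one_id (hy : radiusSq y < 2) (hw : y.2.2 < 1) :
    planeBracket (modelGH 1 id Prod.fst) (modelGH 1 id fun z => z.2.1) y = -(y.1 * y.2.1) := by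
  have hnear (u : R3 → ℝ) : modelGH 1 id u =ᶠ[𝓝 y] fun z => 2⁻¹ * u z ^ 2 := by
    filter_upwards [eventually_radiusSq_lt_and_lt hy hw] with z hz
    simp [modelGH, cutoff_of_le hz.1.le, cutoff_of_le hz.2.le]
    ring
  rw [planeBracket_congr (hnear _) (hnear _), planeBracket_eq_of_hasFDerivAt
    (((hasFDerivAt_coordA y).pow 2).const_mul 2⁻¹) (((hasFDerivAt_coordB y).pow 2).const_mul 2⁻¹)]
  simp

lemma exists_planeBracket_model_ne_zero :
    ∃ a : ℝ, planeBracket (modelF id)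
      (planeBracket (modelGH 1 id Prod.fst) (modelGH 1 id fun z => z.2.1)) (a, 0, 0) ≠ 0 := by
  obtain ⟨s₀, hs₀, hd⟩ := exists_deriv_cutoff_eq_neg_one 1
  set y₀ : R3 := (√s₀, 0, 0)
  have hy₀ : radiusSq y₀ = s₀ := by simp [y₀, radiusSq, Real.sq_sqrt (by linarith [hs₀.1] : 0 ≤ s₀)]
  have hnear := eventually_radiusSq_lt_and_lt (y := y₀) (r := 2) (c := 1)
    (by rw [hy₀]; linarith [hs₀.2]) (by simp [y₀])
  have hGH : planeBracket (modelGH 1 id Prod.fst) (modelGH 1 id fun z => z.2.1)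
      =ᶠ[𝓝 y₀] fun z => -(z.1 * z.2.1) := by
    filter_upwards [hnear] with z hz
    exact planeBracket_modelGH_one_id hz.1 hz.2
  have hF : modelF id =ᶠ[𝓝 y₀] fun z => cutoff 1 (radiusSq z) := by
    filter_upwards [hnear] with z hz
    simp [modelF, cutoff_of_le hz.2.le]
  have hc : HasDerivAt (cutoff 1) (-1) (radiusSq y₀) := by
    rw [← hd, hy₀]
    exact ((contDiff_cutoff 1).differentiable (by simp) s₀).hasDerivAt
  refine ⟨√s₀, ?_⟩
  rw [planeBracket_congr hF hGH, planeBracket_eq_of_hasFDerivAt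
    (f := fun z => cutoff 1 (radiusSq z)) (g := fun z => -(z.1 * z.2.1))
    (hc.comp_hasFDerivAt _ (hasFDerivAt_radiusSq _))
    ((hasFDerivAt_coordA _).mul (hasFDerivAt_coordB _)).neg]
  simpa [y₀] using (Real.sqrt_pos.2 (by linarith [hs₀.1] : 0 < s₀)).ne'

lemma planeBracket_perturbedModel_eq_zero (K : ℕ) (y : R3) :
    planeBracket (modelF (stairF K))
      (planeBracket (modelGH (ghRatio K) (stairGH K) Prod.fst)
        (modelGH (ghRatio K) (stairGH K) fun z => z.2.1)) y = 0 := by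
  have hs := contDiff_radiusSq.continuous.tendsto y
  have hc : Differentiable ℝ (cutoff 1) := (contDiff_cutoff 1).differentiable (by simp)
  rcases stairF_or_stairGH_eventuallyEq K (radiusSq y) with hF | ⟨hy, hGH⟩
  · refine planeBracket_eq_zero_of_eventuallyEq_comp_snd_snd
      ((hc _).const_mul (cutoff 1 (stairF K (radiusSq y)))) ?_
    filter_upwards [hF.comp_tendsto hs] with z (hz : stairF K (radiusSq z) = stairF K (radiusSq y))
    rw [modelF, hz]
  · apply planeBracket_eq_zero_of_eventuallyEq_zero
    have hU : ∀ᶠ z in 𝓝 y, stairGH K (radiusSq z) = stairGH K (radiusSq y) ∧ radiusSq z ≠ 0 :=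
      (hGH.comp_tendsto hs).and (hs.eventually_ne hy)
    filter_upwards [hU.eventually_nhds] with z hz
    have hnear (u : R3 → ℝ) : modelGH (ghRatio K) (stairGH K) u =ᶠ[𝓝 z] fun z' =>
        stairGH K (radiusSq y) * cutoff 2 (stairGH K (radiusSq y)) / 2 *
          (u z' ^ 2 / radiusSq z') * cutoff 1 z'.2.2 := by
      filter_upwards [hz] with z' hz'
      rw [modelGH_eq_angular (ghRatio_mul_self K) u hz'.2, hz'.1]
    rw [planeBracket_congr (hnear _) (hnear _)]
    exact planeBracket_angular_eq_zero _ (hc _) hz.self_of_nhds.2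

lemma abs_modelF_stairF_sub_le {L : NNReal} (hL : LipschitzWith L (cutoff 1)) {K : ℕ}
    (hK : K ≠ 0) (y : R3) : |modelF (stairF K) y - modelF id y| ≤ L * (K : ℝ)⁻¹ :=
  abs_modelF_sub_le hL (fun _ hs => abs_stairF_sub_le hK hs)
    (fun _ hs => by rw [stairF_of_ge hK hs]; norm_num) y

lemma abs_modelGH_stairGH_sub_le {L : NNReal} (hL : LipschitzWith L (cutoff 2)) {K : ℕ}
    (hK : K ≠ 0) (hu : u y ^ 2 ≤ radiusSq y) :
    |modelGH (ghRatio K) (stairGH K) u y - modelGH 1 id u y| ≤ (1 + 3 * L) / 2 * (K : ℝ)⁻¹ :=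
  abs_modelGH_sub_le hL (ghRatio_mul_self K) (fun _ hs => abs_stairGH_sub_le hK hs)
    (fun _ hs => (stairGH_of_ge hK hs).ge) hu

end Models

section Reduction

variable {n : ℕ} [NeZero n]

def restEnergy (x : Phase n) : ℝ := ∑ j ∈ univ.erase 0, (x.1 j ^ 2 + x.2 j ^ 2)

def reduction (x : Phase n) : R3 := (x.1 0, x.2 0, restEnergy x)

lemma contDiff_reduction : ContDiff ℝ ∞ (reduction (n := n)) := by
  have hP (j : Fin n) : ContDiff ℝ ∞ fun x : Phase n => x.1 j :=
    (contDiff_apply ℝ ℝ j).comp contDiff_fst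
  have hQ (j : Fin n) : ContDiff ℝ ∞ fun x : Phase n => x.2 j :=
    (contDiff_apply ℝ ℝ j).comp contDiff_snd
  exact (hP 0).prodMk ((hQ 0).prodMk (ContDiff.sum fun j _ => ((hP j).pow 2).add ((hQ j).pow 2)))

lemma fderiv_reduction_apply (x v : Phase n) :
    fderiv ℝ reduction x v =
      (v.1 0, v.2 0, ∑ j ∈ univ.erase 0, (2 * x.1 j * v.1 j + 2 * x.2 j * v.2 j)) := by
  have hP (j : Fin n) : HasFDerivAt (fun x : Phase n => x.1 j) _ x :=
    (hasFDerivAt_apply (𝕜 := ℝ) j x.1).comp x (hasFDerivAt_fst (p := x))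
  have hQ (j : Fin n) : HasFDerivAt (fun x : Phase n => x.2 j) _ x :=
    (hasFDerivAt_apply (𝕜 := ℝ) j x.2).comp x (hasFDerivAt_snd (p := x))
  have hr : HasFDerivAt reduction _ x := (hP 0).prodMk ((hQ 0).prodMk
    (HasFDerivAt.fun_sum fun j _ => ((hP j).pow 2).add ((hQ j).pow 2)))
  rw [hr.fderiv]
  simp

lemma fderiv_reduction_single_fst (x : Phase n) (i : Fin n) :
    fderiv ℝ reduction x (Pi.single i 1, 0) =
      if i = 0 then (1, 0, 0) else (2 * x.1 i) • (0, 0, 1) := by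
  rw [fderiv_reduction_apply]
  split_ifs with hi
  · subst hi; simp [Pi.single_apply]
  · simp [Pi.single_apply, hi, Ne.symm hi]

lemma fderiv_reduction_single_snd (x : Phase n) (i : Fin n) :
    fderiv ℝ reduction x (0, Pi.single i 1) =
      if i = 0 then (0, 1, 0) else (2 * x.2 i) • (0, 0, 1) := by
  rw [fderiv_reduction_apply]
  split_ifs with hi
  · subst hi; simp [Pi.single_apply]
  · simp [Pi.single_apply, hi, Ne.symm hi]

lemma poisson_comp_reduction {Θ Ξ : R3 → ℝ} (hΘ : Differentiable ℝ Θ)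
    (hΞ : Differentiable ℝ Ξ) (x : Phase n) :
    poisson (Θ ∘ reduction) (Ξ ∘ reduction) x = planeBracket Θ Ξ (reduction x) := by
  have hr : DifferentiableAt ℝ reduction x := contDiff_reduction.differentiable (by simp) x
  simp only [poisson, pderivP, pderivQ, fderiv_comp x (hΘ _) hr, fderiv_comp x (hΞ _) hr,
    ContinuousLinearMap.comp_apply, fderiv_reduction_single_fst, fderiv_reduction_single_snd]
  -- for `i ≠ 0` both products equal `4 p_i q_i ∂_wΘ ∂_wΞ`
  rw [Fintype.sum_eq_single 0 fun i hi => by simp only [hi, if_false, map_smul]; ring]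
  simp [planeBracket]

lemma poisson_poisson_comp_reduction {Θ Ξ Ψ : R3 → ℝ} (hΘ : ContDiff ℝ ∞ Θ)
    (hΞ : ContDiff ℝ ∞ Ξ) (hΨ : ContDiff ℝ ∞ Ψ) (x : Phase n) :
    poisson (Θ ∘ reduction) (poisson (Ξ ∘ reduction) (Ψ ∘ reduction)) x =
      planeBracket Θ (planeBracket Ξ Ψ) (reduction x) := by
  have hinner : poisson (Ξ ∘ reduction) (Ψ ∘ reduction) = planeBracket Ξ Ψ ∘ reduction (n := n) :=
    funext (poisson_comp_reduction (hΞ.differentiable (by simp)) (hΨ.differentiable (by simp)))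
  rw [hinner, poisson_comp_reduction (hΘ.differentiable (by simp))
    ((contDiff_planeBracket hΞ hΨ).differentiable (by simp))]

lemma reduction_single (a : ℝ) :
    reduction ((Pi.single (0 : Fin n) a, 0) : Phase n) = (a, 0, 0) := by
  simp [reduction, restEnergy, Pi.single_apply]

omit [NeZero n] in
lemma norm_le_of_sum_sq_le {x : Phase n} {r : ℝ} (hr : 0 ≤ r)
    (h : ∑ j, (x.1 j ^ 2 + x.2 j ^ 2) ≤ r ^ 2) : ‖x‖ ≤ r := by
  have hle (j : Fin n) : x.1 j ^ 2 + x.2 j ^ 2 ≤ r ^ 2 :=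
    (single_le_sum (fun j _ => by positivity) (mem_univ j)).trans h
  refine norm_prod_le_iff.2 ⟨(pi_norm_le_iff_of_nonneg hr).2 fun j => ?_,
    (pi_norm_le_iff_of_nonneg hr).2 fun j => ?_⟩ <;>
  · rw [Real.norm_eq_abs]
    exact abs_le_of_sq_le_sq (by linarith [hle j, sq_nonneg (x.1 j), sq_nonneg (x.2 j)]) hr

lemma hasCompactSupport_comp_reduction {Θ : R3 → ℝ}
    (h : ∀ y, 3 ≤ radiusSq y ∨ 2 ≤ y.2.2 → Θ y = 0) :
    HasCompactSupport (Θ ∘ reduction (n := n)) := by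
  refine HasCompactSupport.intro (isCompact_closedBall 0 3) fun x hx => h _ ?_
  by_contra! hlt
  refine hx (mem_closedBall_zero_iff.2 (norm_le_of_sum_sq_le (by norm_num) ?_))
  rw [← add_sum_erase _ _ (mem_univ 0)]
  change radiusSq (reduction x) + (reduction x).2.2 ≤ _
  linarith [hlt.1, hlt.2]

lemma smoothCpt_comp_reduction {Θ : R3 → ℝ} (hΘ : ContDiff ℝ ∞ Θ)
    (h : ∀ y, 3 ≤ radiusSq y ∨ 2 ≤ y.2.2 → Θ y = 0) : SmoothCpt (Θ ∘ reduction (n := n)) :=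
  ⟨hΘ.comp contDiff_reduction, hasCompactSupport_comp_reduction h⟩

lemma smoothCpt_modelF_comp_reduction {T : ℝ → ℝ} (hT : ContDiff ℝ ∞ T)
    (hT3 : ∀ s, 3 ≤ s → 2 ≤ T s) : SmoothCpt (modelF T ∘ reduction (n := n)) :=
  smoothCpt_comp_reduction (contDiff_modelF hT) fun _ => modelF_eq_zero hT3

lemma smoothCpt_modelGH_comp_reduction {ρ R : ℝ → ℝ} {u : R3 → ℝ} (hρ : ContDiff ℝ ∞ ρ)
    (hR : ContDiff ℝ ∞ R) (hu : ContDiff ℝ ∞ u) (hR3 : ∀ s, 3 ≤ s → 3 ≤ R s) :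
    SmoothCpt (modelGH ρ R u ∘ reduction (n := n)) :=
  smoothCpt_comp_reduction (contDiff_modelGH hρ hR hu) fun _ => modelGH_eq_zero hR3

lemma exists_poisson_model_ne_zero :
    ∃ x : Phase n, poisson (modelF id ∘ reduction) (poisson (modelGH 1 id Prod.fst ∘ reduction)
      (modelGH 1 id (fun z => z.2.1) ∘ reduction)) x ≠ 0 := by
  obtain ⟨a, ha⟩ := exists_planeBracket_model_ne_zero
  refine ⟨(Pi.single 0 a, 0), ?_⟩
  have hone : ContDiff ℝ ∞ (1 : ℝ → ℝ) := contDiff_const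
  rwa [poisson_poisson_comp_reduction (contDiff_modelF contDiff_id)
    (contDiff_modelGH hone contDiff_id contDiff_fst)
    (contDiff_modelGH hone contDiff_id contDiff_snd.fst), reduction_single]

lemma poisson_perturbedModel_eq_zero (K : ℕ) (x : Phase n) :
    poisson (modelF (stairF K) ∘ reduction)
      (poisson (modelGH (ghRatio K) (stairGH K) Prod.fst ∘ reduction)
        (modelGH (ghRatio K) (stairGH K) (fun z => z.2.1) ∘ reduction)) x = 0 := by
  rw [poisson_poisson_comp_reduction (contDiff_modelF contDiff_stairF)
    (contDiff_modelGH (contDiff_ghRatio K) contDiff_stairGH contDiff_fst)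
    (contDiff_modelGH (contDiff_ghRatio K) contDiff_stairGH contDiff_snd.fst)]
  exact planeBracket_perturbedModel_eq_zero K _

end Reduction

lemma unif_lt_of_forall_abs_le {n : ℕ} {f : Phase n → ℝ} {B ε : ℝ} (h : ∀ x, |f x| ≤ B)
    (hB : B < ε) : unif f < ε :=
  (ciSup_le h).trans_lt hB

end

end TripleBracket

open TripleBracket

/-- **Non-rigidity of the triple bracket.** For every `n ≥ 1` there exist
`F, G, H ∈ C_c^∞(ℝ^{2n})` with `{F, {G, H}} ≢ 0` which admit arbitrarily uniformly-close
smooth compactly supported perturbations `F', G', H'` with `{F', {G', H'}} ≡ 0`. -/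
theorem triple_bracket_not_rigid (n : ℕ) (hn : 1 ≤ n) :
    ∃ F G H : Phase n → ℝ,
      SmoothCpt F ∧ SmoothCpt G ∧ SmoothCpt H ∧
      (¬ ∀ x, poisson F (poisson G H) x = 0) ∧
      ∀ ε > (0 : ℝ), ∃ F' G' H' : Phase n → ℝ,
        SmoothCpt F' ∧ SmoothCpt G' ∧ SmoothCpt H' ∧
        unif (fun x => F' x - F x) < ε ∧
        unif (fun x => G' x - G x) < ε ∧
        unif (fun x => H' x - H x) < ε ∧
        ∀ x, poisson F' (poisson G' H') x = 0 := by
  have : NeZero n := ⟨by omega⟩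
  refine ⟨modelF id ∘ reduction, modelGH 1 id Prod.fst ∘ reduction,
    modelGH 1 id (fun z => z.2.1) ∘ reduction,
    smoothCpt_modelF_comp_reduction contDiff_id fun s hs => by simp only [id]; linarith,
    smoothCpt_modelGH_comp_reduction contDiff_const contDiff_id contDiff_fst fun _ h => h,
    smoothCpt_modelGH_comp_reduction contDiff_const contDiff_id contDiff_snd.fst fun _ h => h,
    fun h => exists_poisson_model_ne_zero.elim fun x hx => hx (h x), fun ε hε => ?_⟩
  obtain ⟨L, hL⟩ := exists_lipschitzWith_cutoff
  obtain ⟨K, hK⟩ := exists_nat_gt ((1 + 3 * L) / ε)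
  have hK0 : K ≠ 0 := (Nat.cast_pos.1 ((div_pos (by positivity) hε).trans hK)).ne'
  have hKε (C : ℝ) (hC : C ≤ 1 + 3 * L) : C * (K : ℝ)⁻¹ < ε := by
    rw [div_lt_iff₀ hε] at hK
    rw [mul_inv_lt_iff₀ (by positivity)]
    linarith
  have hR3 (s : ℝ) (hs : 3 ≤ s) : 3 ≤ stairGH K s := (stairGH_of_ge hK0 hs).ge
  refine ⟨modelF (stairF K) ∘ reduction, modelGH (ghRatio K) (stairGH K) Prod.fst ∘ reduction,
    modelGH (ghRatio K) (stairGH K) (fun z => z.2.1) ∘ reduction,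
    smoothCpt_modelF_comp_reduction contDiff_stairF fun s hs => by
      rw [stairF_of_ge hK0 hs]; norm_num,
    smoothCpt_modelGH_comp_reduction (contDiff_ghRatio K) contDiff_stairGH contDiff_fst hR3,
    smoothCpt_modelGH_comp_reduction (contDiff_ghRatio K) contDiff_stairGH contDiff_snd.fst hR3,
    unif_lt_of_forall_abs_le (fun x => abs_modelF_stairF_sub_le (hL 1) hK0 _)
      (hKε _ (by linarith [L.coe_nonneg])),
    unif_lt_of_forall_abs_le (fun x => abs_modelGH_stairGH_sub_le (hL 2) hK0
      (sq_fst_le_radiusSq _)) (hKε _ (by linarith [L.coe_nonneg])),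
    unif_lt_of_forall_abs_le (fun x => abs_modelGH_stairGH_sub_le (hL 2) hK0
      (sq_snd_fst_le_radiusSq _)) (hKε _ (by linarith [L.coe_nonneg])),
    poisson_perturbedModel_eq_zero K⟩
end

section
/- Let H, K ∈ C_c^∞(ℝ^{2n}) with Hamiltonian flows (ψ_H^t) and (ψ_K^t), write ψ_K := ψ_K^1, and define L(x,t) = H(x) − H(ψ_K^{−1}(ψ_H^{−t}(x))). Then ∫_0^1 ( sup_{x∈ℝ^{2n}} L(x,t) ) dt ≤ max_{x∈ℝ^{2n}} {H, K}(x). -/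
/-- The Hamiltonian vector field `X_H = (−∂H/∂q, ∂H/∂p)`. -/
noncomputable def hamVF {n : ℕ} (H : Phase n → ℝ) (x : Phase n) : Phase n :=
  (fun i => -(pderivQ H i x), fun i => pderivP H i x)

/-- `ψ` is the Hamiltonian flow of `H`: `ψ^0 = id`, the group (flow) law holds, and
`(d/dt) ψ^t x = X_H (ψ^t x)`. -/
def IsHamFlow {n : ℕ} (H : Phase n → ℝ) (ψ : ℝ → Phase n → Phase n) : Prop :=
  (∀ x, ψ 0 x = x) ∧ (∀ s t x, ψ (s + t) x = ψ s (ψ t x)) ∧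
  (∀ x t, HasDerivAt (fun s => ψ s x) (hamVF H (ψ t x)) t)

/-!
Along the flow of `K` one has `d/ds H(ψ_K^s y) = {H, K}(ψ_K^s y)`, so by the mean value theorem
`H y - H(ψ_K^{-1} y) ≤ max {H, K}` for every `y`. Since `H` is invariant under its own flow and
`ψ_H^{-t}` is onto, `sup_x L(x, t) = sup_y (H y - H(ψ_K^{-1} y))` does not depend on `t`, so the
integrand is a constant bounded by `max {H, K}`.
-/

namespace Phase

variable {n : ℕ}

theorem clm_apply_eq_sum_single (L : Phase n →L[ℝ] ℝ) (a b : Fin n → ℝ) :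
    L (a, b) = ∑ i, a i * L (Pi.single i 1, 0) + ∑ i, b i * L (0, Pi.single i 1) := by
  have hp : ∀ v, L (v, 0) = ∑ i, v i * L (Pi.single i 1, 0) := fun v => by
    conv_lhs => rw [pi_eq_sum_univ' v]
    rw [← ContinuousLinearMap.inl_apply (R := ℝ) (M₂ := Fin n → ℝ), map_sum, map_sum]
    simp only [map_smul, ContinuousLinearMap.inl_apply, smul_eq_mul]
  have hq : ∀ v, L (0, v) = ∑ i, v i * L (0, Pi.single i 1) := fun v => by
    conv_lhs => rw [pi_eq_sum_univ' v]
    rw [← ContinuousLinearMap.inr_apply (R := ℝ) (M₁ := Fin n → ℝ), map_sum, map_sum]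
    simp only [map_smul, ContinuousLinearMap.inr_apply, smul_eq_mul]
  rw [← hp, ← hq, ← map_add, Prod.mk_add_mk, add_zero, zero_add]

end Phase

section Poisson

variable {n : ℕ}

theorem fderiv_apply_hamVF (F G : Phase n → ℝ) (x : Phase n) :
    fderiv ℝ F x (hamVF G x) = poisson F G x := by
  rw [hamVF, Phase.clm_apply_eq_sum_single, poisson, ← Finset.sum_add_distrib]
  exact Finset.sum_congr rfl fun i _ => by simp only [pderivP, pderivQ]; ring

theorem poisson_self (F : Phase n → ℝ) : poisson F F = 0 := by
  ext x
  simp [poisson, mul_comm]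

theorem continuous_poisson {F G : Phase n → ℝ} (hF : ContDiff ℝ 1 F) (hG : ContDiff ℝ 1 G) :
    Continuous (poisson F G) := by
  have hpartial : ∀ {F : Phase n → ℝ}, ContDiff ℝ 1 F → ∀ v : Phase n,
      Continuous fun x => fderiv ℝ F x v := fun hF v =>
    (hF.continuous_fderiv one_ne_zero).clm_apply continuous_const
  unfold poisson pderivP pderivQ
  fun_prop (disch := assumption)

theorem HasCompactSupport.poisson {F : Phase n → ℝ} (hF : HasCompactSupport F)
    (G : Phase n → ℝ) : HasCompactSupport (poisson F G) := by
  refine (hF.fderiv ℝ).mono fun x hx hFx => hx ?_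
  simp [_root_.poisson, pderivP, pderivQ, hFx]

end Poisson

namespace IsHamFlow

variable {n : ℕ} {K : Phase n → ℝ} {ψ : ℝ → Phase n → Phase n}

theorem hasDerivAt_comp (hψ : IsHamFlow K ψ) {F : Phase n → ℝ} (hF : Differentiable ℝ F)
    (x : Phase n) (t : ℝ) : HasDerivAt (fun s => F (ψ s x)) (poisson F K (ψ t x)) t := by
  rw [← fderiv_apply_hamVF]
  exact (hF _).hasFDerivAt.comp_hasDerivAt t (hψ.2.2 x t)

theorem conserves_hamiltonian (hψ : IsHamFlow K ψ) (hK : Differentiable ℝ K) (t : ℝ)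
    (x : Phase n) : K (ψ t x) = K x := by
  have hconst := is_const_of_deriv_eq_zero (f := fun s => K (ψ s x))
    (fun s => (hψ.hasDerivAt_comp hK x s).differentiableAt)
    (fun s => by rw [(hψ.hasDerivAt_comp hK x s).deriv, poisson_self, Pi.zero_apply]) t 0
  simpa [hψ.1 x] using hconst

theorem surjective (hψ : IsHamFlow K ψ) (t : ℝ) : Function.Surjective (ψ t) :=
  fun y => ⟨ψ (-t) y, by rw [← hψ.2.1, add_neg_cancel, hψ.1]⟩

theorem sub_le_iSup_poisson_mul (hψ : IsHamFlow K ψ) {F : Phase n → ℝ}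
    (hF : Differentiable ℝ F) (hbdd : BddAbove (Set.range (poisson F K))) (x : Phase n)
    {s t : ℝ} (hst : s ≤ t) : F (ψ t x) - F (ψ s x) ≤ (⨆ y, poisson F K y) * (t - s) :=
  image_sub_le_mul_sub_of_deriv_le (fun r => (hψ.hasDerivAt_comp hF x r).differentiableAt)
    (fun r => (hψ.hasDerivAt_comp hF x r).deriv ▸ le_ciSup hbdd _) hst

end IsHamFlow

/-- With `L(x,t) = H(x) − H(ψ_K^{−1}(ψ_H^{−t}(x)))`, one has
`∫_0^1 sup_x L(x,t) dt ≤ max {H, K}`. -/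
theorem integral_sup_commutator_le_max_poisson (n : ℕ) (H K : Phase n → ℝ)
    (hH : SmoothCpt H) (hK : SmoothCpt K)
    (ψH ψK : ℝ → Phase n → Phase n)
    (hψH : IsHamFlow H ψH) (hψK : IsHamFlow K ψK) :
    (∫ t in (0 : ℝ)..1, ⨆ x, (H x - H (ψK (-1) (ψH (-t) x))))
      ≤ ⨆ x, poisson H K x := by
  have hHd : Differentiable ℝ H := hH.1.differentiable (by simp)
  have hbdd : BddAbove (Set.range (poisson H K)) :=
    Continuous.bddAbove_range_of_hasCompactSupport
      (continuous_poisson (hH.1.of_le (by simp)) (hK.1.of_le (by simp))) (hH.2.poisson K)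
  have hsup_const : ∀ t : ℝ,
      ⨆ x, (H x - H (ψK (-1) (ψH (-t) x))) = ⨆ y, (H y - H (ψK (-1) y)) :=
    fun t => (hψH.surjective (-t)).iSup_congr _ fun x => by rw [hψH.conserves_hamiltonian hHd]
  have hstep : ∀ y, H y - H (ψK (-1) y) ≤ ⨆ x, poisson H K x := fun y => by
    simpa [hψK.1] using hψK.sub_le_iSup_poisson_mul hHd hbdd y (by norm_num : (-1 : ℝ) ≤ 0)
  simp only [hsup_const, intervalIntegral.integral_const, sub_zero, one_smul]
  exact ciSup_le hstep
end
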